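/- arXiv:2501.03894 — 6 statements merged into one kernel-verified Lean document; each statement's English description precedes it below -/
import Mathlib

section
/- Suppose the system x_{t+1} = f(x_t, w_t), y_t = h(x_t, v_t) is i-UIOSS with KL functions β_x, β_w, β_y, β_v. Fix a horizon N ≥ 1 and a time t ≥ 1, let x_i (i = t−t∧N,…,t) be the true states driven by noises w_i ∈ W, v_i ∈ V with y_i = h(x_i, v_i), let x̄_{t−t∧N} ∈ X be any prediction, and let (x̂_{t−t∧N|t}, v̂_{t−t∧N|t}^{t−1}, ŵ_{t−t∧N|t}^{t−1}) be any minimizer over X × V^{t∧N} × W^{t∧N} of the max-type moving-horizon cost J_t^{t∧N}, with x̂_{t|t} obtained by propagating x̂_{t−t∧N|t} through the dynamics with the noises ŵ_{i|t}. Then |x_t − x̂_{t|t}| ≤ max( 2β_x(2|x_{t−t∧N} − x̄_{t−t∧N}|, t∧N), max_{t−t∧N ≤ i ≤ t−1} β_v(2|v_i|, t−1−i), max_{t−t∧N ≤ i ≤ t−1} β_w(2|w_i|, t−1−i) ). -/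
/-- max over i = 0, …, t-1 of g i (0 if t = 0). -/
def finMax (g : ℕ → ℝ) : ℕ → ℝ
  | 0 => 0
  | t + 1 => max (finMax g t) (g t)

/-- A function `β : ℝ≥0 × ℕ → ℝ` of class KL. -/
def IsKL (β : ℝ → ℕ → ℝ) : Prop :=
  (∀ k : ℕ, ContinuousOn (fun s => β s k) (Set.Ici 0) ∧
      StrictMonoOn (fun s => β s k) (Set.Ici 0) ∧ β 0 k = 0) ∧
  (∀ s : ℝ, 0 ≤ s →
      (Antitone fun k => β s k) ∧ Filter.Tendsto (fun k => β s k) Filter.atTop (nhds 0))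

/-- trajectory of `x_{t+1} = f (x_t, w_t)` -/
def traj {n : ℕ}
    (f : EuclideanSpace ℝ (Fin n) → EuclideanSpace ℝ (Fin n) → EuclideanSpace ℝ (Fin n))
    (x0 : EuclideanSpace ℝ (Fin n)) (w : ℕ → EuclideanSpace ℝ (Fin n)) :
    ℕ → EuclideanSpace ℝ (Fin n)
  | 0 => x0
  | t + 1 => f (traj f x0 w t) (w t)

/-- Incremental uniform input/output-to-state stability of
`x_{t+1} = f(x_t,w_t)`, `y_t = h(x_t,v_t)`. -/
def iUIOSS {n m : ℕ} (X W : Set (EuclideanSpace ℝ (Fin n)))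
    (Vset : Set (EuclideanSpace ℝ (Fin m)))
    (f : EuclideanSpace ℝ (Fin n) → EuclideanSpace ℝ (Fin n) → EuclideanSpace ℝ (Fin n))
    (h : EuclideanSpace ℝ (Fin n) → EuclideanSpace ℝ (Fin m) → EuclideanSpace ℝ (Fin m))
    (βx βw βy βv : ℝ → ℕ → ℝ) : Prop :=
  ∀ xb ∈ X, ∀ xt ∈ X,
    ∀ wb wt : ℕ → EuclideanSpace ℝ (Fin n), (∀ i, wb i ∈ W) → (∀ i, wt i ∈ W) →
    ∀ vb vt : ℕ → EuclideanSpace ℝ (Fin m), (∀ i, vb i ∈ Vset) → (∀ i, vt i ∈ Vset) →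
    ∀ t : ℕ,
      ‖traj f xb wb t - traj f xt wt t‖ ≤
        max (βx ‖xb - xt‖ t)
          (finMax (fun i =>
            max (βw ‖wb i - wt i‖ (t - 1 - i))
              (max (βy ‖h (traj f xb wb i) (vb i) - h (traj f xt wt i) (vt i)‖ (t - 1 - i))
                (βv ‖vb i - vt i‖ (t - 1 - i)))) t)

/-- The max-type moving-horizon cost at time `t ≥ 1` with horizon `N`, window length
`L = min t N` and window-relative noise indexing (`ŵ j`, `v̂ j` are the noises at
absolute time `t − L + j`), given measurements `y` and prediction `pred (t − L)`. -/
noncomputable def mheCost {n m : ℕ}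
    (f : EuclideanSpace ℝ (Fin n) → EuclideanSpace ℝ (Fin n) → EuclideanSpace ℝ (Fin n))
    (h : EuclideanSpace ℝ (Fin n) → EuclideanSpace ℝ (Fin m) → EuclideanSpace ℝ (Fin m))
    (βx βw βy βv : ℝ → ℕ → ℝ) (N : ℕ)
    (pred : ℕ → EuclideanSpace ℝ (Fin n)) (y : ℕ → EuclideanSpace ℝ (Fin m)) (t : ℕ)
    (z : EuclideanSpace ℝ (Fin n)) (vhat : ℕ → EuclideanSpace ℝ (Fin m))
    (what : ℕ → EuclideanSpace ℝ (Fin n)) : ℝ :=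
  max (βx (2 * ‖z - pred (t - min t N)‖) (min t N))
    (finMax (fun j =>
      max (βw (2 * ‖what j‖) (min t N - 1 - j))
        (max (βy ‖y (t - min t N + j) - h (traj f z what j) (vhat j)‖ (min t N - 1 - j))
          (βv (2 * ‖vhat j‖) (min t N - 1 - j)))) (min t N))

lemma finMax_nonneg (g : ℕ → ℝ) : ∀ t, 0 ≤ finMax g t
  | 0 => le_refl 0
  | t + 1 => le_max_of_le_left (finMax_nonneg g t)

lemma le_finMax (g : ℕ → ℝ) {j t : ℕ} (hj : j < t) : g j ≤ finMax g t := by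
  induction t with
  | zero => omega
  | succ t ih =>
    rcases Nat.lt_succ_iff_lt_or_eq.mp hj with hj' | hj'
    · exact le_max_of_le_left (ih hj')
    · subst hj'; exact le_max_right _ _

lemma finMax_le (g : ℕ → ℝ) {t : ℕ} {c : ℝ} (hc : 0 ≤ c) (hg : ∀ j, j < t → g j ≤ c) :
    finMax g t ≤ c := by
  induction t with
  | zero => exact hc
  | succ t ih =>
    exact max_le (ih fun j hj => hg j (hj.trans (Nat.lt_succ_self t)))
      (hg t (Nat.lt_succ_self t))

lemma traj_congr {n : ℕ}
    (f : EuclideanSpace ℝ (Fin n) → EuclideanSpace ℝ (Fin n) → EuclideanSpace ℝ (Fin n))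
    (x0 : EuclideanSpace ℝ (Fin n)) (w1 w2 : ℕ → EuclideanSpace ℝ (Fin n)) :
    ∀ t, (∀ j, j < t → w1 j = w2 j) → traj f x0 w1 t = traj f x0 w2 t
  | 0, _ => rfl
  | t + 1, hw => by
    simp only [traj,
      traj_congr f x0 w1 w2 t (fun j hj => hw j (hj.trans (Nat.lt_succ_self t))),
      hw t (Nat.lt_succ_self t)]

lemma IsKL.mono' {β : ℝ → ℕ → ℝ} (hβ : IsKL β) {a b : ℝ} (ha : 0 ≤ a) (hab : a ≤ b)
    (k : ℕ) : β a k ≤ β b k := by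
  rcases eq_or_lt_of_le hab with rfl | hlt
  · exact le_refl _
  · exact le_of_lt ((hβ.1 k).2.1 (Set.mem_Ici.2 ha) (Set.mem_Ici.2 (ha.trans hab)) hlt)

lemma IsKL.nonneg' {β : ℝ → ℕ → ℝ} (hβ : IsKL β) {s : ℝ} (hs : 0 ≤ s) (k : ℕ) :
    0 ≤ β s k := by
  have h0 := (hβ.1 k).2.2
  have := hβ.mono' le_rfl hs k
  linarith

lemma IsKL.add_le' {β : ℝ → ℕ → ℝ} (hβ : IsKL β) {a b : ℝ} (ha : 0 ≤ a) (hb : 0 ≤ b)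
    (k : ℕ) : β (a + b) k ≤ max (β (2 * a) k) (β (2 * b) k) := by
  rcases le_total a b with hab | hab
  · exact le_max_of_le_right (hβ.mono' (by linarith) (by linarith) k)
  · exact le_max_of_le_left (hβ.mono' (by linarith) (by linarith) k)

/-- **Within-window bound for exact moving-horizon estimation (max-type cost).**
Any exact minimizer of the max-type moving-horizon cost over `X × V^{t∧N} × W^{t∧N}`
satisfies `|x_t − x̂_{t|t}| ≤ max(2β_x(2|x_{t−t∧N} − x̄_{t−t∧N}|, t∧N),
max_i β_v(2|v_i|, t−1−i), max_i β_w(2|w_i|, t−1−i))`. -/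
theorem stmt3 {n m : ℕ}
    (X W : Set (EuclideanSpace ℝ (Fin n))) (Vset : Set (EuclideanSpace ℝ (Fin m)))
    (f : EuclideanSpace ℝ (Fin n) → EuclideanSpace ℝ (Fin n) → EuclideanSpace ℝ (Fin n))
    (h : EuclideanSpace ℝ (Fin n) → EuclideanSpace ℝ (Fin m) → EuclideanSpace ℝ (Fin m))
    (βx βw βy βv : ℝ → ℕ → ℝ)
    (hβx : IsKL βx) (hβw : IsKL βw) (hβy : IsKL βy) (hβv : IsKL βv)
    (hsys : iUIOSS X W Vset f h βx βw βy βv)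
    (N : ℕ) (hN : 1 ≤ N) (t : ℕ) (ht : 1 ≤ t)
    -- the true states on the window, driven by the true noises
    (x : ℕ → EuclideanSpace ℝ (Fin n)) (w : ℕ → EuclideanSpace ℝ (Fin n))
    (v : ℕ → EuclideanSpace ℝ (Fin m)) (y : ℕ → EuclideanSpace ℝ (Fin m))
    (hxX : x (t - min t N) ∈ X)
    (hrec : ∀ i, t - min t N ≤ i → i < t → x (i + 1) = f (x i) (w i))
    (hwW : ∀ i, t - min t N ≤ i → i < t → w i ∈ W)
    (hvV : ∀ i, t - min t N ≤ i → i < t → v i ∈ Vset)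
    (hy : ∀ i, t - min t N ≤ i → i < t → y i = h (x i) (v i))
    -- an arbitrary prediction
    (pred : ℕ → EuclideanSpace ℝ (Fin n)) (hpred : pred (t - min t N) ∈ X)
    -- an exact minimizer of the moving-horizon cost, and the resulting estimate
    (z : EuclideanSpace ℝ (Fin n)) (vhat : ℕ → EuclideanSpace ℝ (Fin m))
    (what : ℕ → EuclideanSpace ℝ (Fin n))
    (hzX : z ∈ X) (hvhat : ∀ j, j < min t N → vhat j ∈ Vset)
    (hwhat : ∀ j, j < min t N → what j ∈ W)
    (hmin : ∀ z' ∈ X, ∀ vhat' : ℕ → EuclideanSpace ℝ (Fin m),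
      ∀ what' : ℕ → EuclideanSpace ℝ (Fin n),
      (∀ j, j < min t N → vhat' j ∈ Vset) → (∀ j, j < min t N → what' j ∈ W) →
      mheCost f h βx βw βy βv N pred y t z vhat what ≤
        mheCost f h βx βw βy βv N pred y t z' vhat' what')
    (xhat : EuclideanSpace ℝ (Fin n)) (hxhat : xhat = traj f z what (min t N)) :
    ‖x t - xhat‖ ≤
      max (2 * βx (2 * ‖x (t - min t N) - pred (t - min t N)‖) (min t N))
        (max (finMax (fun j => βv (2 * ‖v (t - min t N + j)‖) (min t N - 1 - j)) (min t N))
          (finMax (fun j => βw (2 * ‖w (t - min t N + j)‖) (min t N - 1 - j)) (min t N))) := by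
  set L := min t N with hLdef
  have hL : 1 ≤ L := le_min ht hN
  have hLt : L ≤ t := min_le_left _ _
  have hbase : t - L ≤ t - L ∧ t - L < t := ⟨le_rfl, by omega⟩
  have hwin : ∀ i, i < L → t - L ≤ t - L + i ∧ t - L + i < t :=
    fun i hi => ⟨Nat.le_add_right _ _, by omega⟩
  -- extended noise sequences
  set wseq : ℕ → EuclideanSpace ℝ (Fin n) :=
    fun j => if j < L then w (t - L + j) else w (t - L) with hwseq
  set vseq : ℕ → EuclideanSpace ℝ (Fin m) :=
    fun j => if j < L then v (t - L + j) else v (t - L) with hvseq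
  set whatseq : ℕ → EuclideanSpace ℝ (Fin n) :=
    fun j => if j < L then what j else w (t - L) with hwhatseq
  set vhatseq : ℕ → EuclideanSpace ℝ (Fin m) :=
    fun j => if j < L then vhat j else v (t - L) with hvhatseq
  have hwseqW : ∀ i, wseq i ∈ W := by
    intro i; rw [hwseq]; dsimp only
    split
    · exact hwW _ (hwin i ‹_›).1 (hwin i ‹_›).2
    · exact hwW _ hbase.1 hbase.2
  have hvseqV : ∀ i, vseq i ∈ Vset := by
    intro i; rw [hvseq]; dsimp only
    split
    · exact hvV _ (hwin i ‹_›).1 (hwin i ‹_›).2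
    · exact hvV _ hbase.1 hbase.2
  have hwhatseqW : ∀ i, whatseq i ∈ W := by
    intro i; rw [hwhatseq]; dsimp only
    split
    · exact hwhat _ ‹_›
    · exact hwW _ hbase.1 hbase.2
  have hvhatseqV : ∀ i, vhatseq i ∈ Vset := by
    intro i; rw [hvhatseq]; dsimp only
    split
    · exact hvhat _ ‹_›
    · exact hvV _ hbase.1 hbase.2
  -- the extended true noise drives the true trajectory
  have traj_true : ∀ j, j ≤ L → traj f (x (t - L)) wseq j = x (t - L + j) := by
    intro j hj
    induction j with
    | zero => rfl
    | succ j ih =>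
      have hjL : j < L := hj
      have hstep := hrec (t - L + j) (hwin j hjL).1 (hwin j hjL).2
      have hws : wseq j = w (t - L + j) := by rw [hwseq]; exact if_pos hjL
      have : t - L + (j + 1) = (t - L + j) + 1 := rfl
      rw [this, hstep, traj, ih (le_of_lt hjL), hws]
  have traj_est : ∀ j, j ≤ L → traj f z whatseq j = traj f z what j := by
    intro j hj
    apply traj_congr
    intro i hi
    rw [hwhatseq]
    exact if_pos (lt_of_lt_of_le hi hj)
  -- shorthand
  set Jstar := mheCost f h βx βw βy βv N pred y t z vhat what with hJstar
  set R1 := βx (2 * ‖x (t - L) - pred (t - L)‖) L with hR1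
  set Rv := finMax (fun j => βv (2 * ‖v (t - L + j)‖) (L - 1 - j)) L with hRv
  set Rw := finMax (fun j => βw (2 * ‖w (t - L + j)‖) (L - 1 - j)) L with hRw
  set RHS := max (2 * R1) (max Rv Rw) with hRHS
  have hR1nn : 0 ≤ R1 := hβx.nonneg' (by positivity) _
  have hRvnn : 0 ≤ Rv := finMax_nonneg _ _
  have hRHSnn : 0 ≤ RHS := le_max_of_le_right (le_max_of_le_left hRvnn)
  -- pieces of the minimizer's cost
  have hJx : βx (2 * ‖z - pred (t - L)‖) L ≤ Jstar := by
    rw [hJstar, mheCost, ← hLdef]; exact le_max_left _ _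
  have hJw : ∀ j, j < L → βw (2 * ‖what j‖) (L - 1 - j) ≤ Jstar := by
    intro j hj
    rw [hJstar, mheCost, ← hLdef]
    refine le_max_of_le_right (le_trans ?_ (le_finMax _ hj))
    exact le_max_left _ _
  have hJy : ∀ j, j < L →
      βy ‖y (t - L + j) - h (traj f z what j) (vhat j)‖ (L - 1 - j) ≤ Jstar := by
    intro j hj
    rw [hJstar, mheCost, ← hLdef]
    refine le_max_of_le_right (le_trans ?_ (le_finMax _ hj))
    exact le_max_of_le_right (le_max_left _ _)
  have hJv : ∀ j, j < L → βv (2 * ‖vhat j‖) (L - 1 - j) ≤ Jstar := by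
    intro j hj
    rw [hJstar, mheCost, ← hLdef]
    refine le_max_of_le_right (le_trans ?_ (le_finMax _ hj))
    exact le_max_of_le_right (le_max_right _ _)
  -- the minimizer's cost is at most the cost of the truth, which is at most RHS
  have hJtrue : Jstar ≤ RHS := by
    have hmem_v : ∀ j, j < L → v (t - L + j) ∈ Vset :=
      fun j hj => hvV _ (hwin j hj).1 (hwin j hj).2
    have hmem_w : ∀ j, j < L → w (t - L + j) ∈ W :=
      fun j hj => hwW _ (hwin j hj).1 (hwin j hj).2
    have hle := hmin (x (t - L)) hxX (fun j => v (t - L + j)) (fun j => w (t - L + j))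
      hmem_v hmem_w
    refine le_trans hle ?_
    rw [mheCost, ← hLdef]
    apply max_le
    · exact le_trans (by linarith) (le_max_left _ _)
    · apply finMax_le _ hRHSnn
      intro j hj
      have htr : traj f (x (t - L)) (fun j => w (t - L + j)) j = x (t - L + j) := by
        rw [traj_congr f (x (t - L)) _ wseq j
          (fun i hi => by rw [hwseq]; exact (if_pos (lt_of_lt_of_le hi (le_of_lt hj))).symm)]
        exact traj_true j (le_of_lt hj)
      have hy0 : y (t - L + j) - h (traj f (x (t - L)) (fun j => w (t - L + j)) j)
          (v (t - L + j)) = 0 := by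
        rw [htr, hy _ (hwin j hj).1 (hwin j hj).2, sub_self]
      apply max_le
      · refine le_max_of_le_right (le_max_of_le_right ?_)
        rw [hRw]; exact le_finMax (fun j => βw (2 * ‖w (t - L + j)‖) (L - 1 - j)) hj
      · apply max_le
        · rw [hy0, norm_zero, (hβy.1 _).2.2]
          exact hRHSnn
        · refine le_max_of_le_right (le_max_of_le_left ?_)
          rw [hRv]; exact le_finMax (fun j => βv (2 * ‖v (t - L + j)‖) (L - 1 - j)) hj
  -- apply i-UIOSS to the true and estimated trajectories
  have hUIOSS := hsys (x (t - L)) hxX z hzX wseq whatseq hwseqW hwhatseqW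
    vseq vhatseq hvseqV hvhatseqV L
  have hxt : traj f (x (t - L)) wseq L = x t := by
    rw [traj_true L le_rfl, Nat.sub_add_cancel hLt]
  have hxhat' : traj f z whatseq L = xhat := by
    rw [traj_est L le_rfl, hxhat]
  rw [hxt, hxhat'] at hUIOSS
  refine le_trans hUIOSS ?_
  apply max_le
  · -- prior term
    have htri : ‖x (t - L) - z‖ ≤ ‖x (t - L) - pred (t - L)‖ + ‖z - pred (t - L)‖ := by
      have : x (t - L) - z = (x (t - L) - pred (t - L)) - (z - pred (t - L)) := by abel
      rw [this]; exact norm_sub_le _ _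
    calc βx ‖x (t - L) - z‖ L
        ≤ βx (‖x (t - L) - pred (t - L)‖ + ‖z - pred (t - L)‖) L :=
          hβx.mono' (norm_nonneg _) htri L
      _ ≤ max (βx (2 * ‖x (t - L) - pred (t - L)‖) L) (βx (2 * ‖z - pred (t - L)‖) L) :=
          hβx.add_le' (norm_nonneg _) (norm_nonneg _) L
      _ ≤ RHS := by
          apply max_le
          · exact le_trans (by linarith) (le_max_left _ _)
          · exact le_trans (hJx.trans hJtrue) le_rfl
  · -- stage terms
    apply finMax_le _ hRHSnn
    intro i hi
    have hws : wseq i = w (t - L + i) := by rw [hwseq]; exact if_pos hi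
    have hvs : vseq i = v (t - L + i) := by rw [hvseq]; exact if_pos hi
    have hwhs : whatseq i = what i := by rw [hwhatseq]; exact if_pos hi
    have hvhs : vhatseq i = vhat i := by rw [hvhatseq]; exact if_pos hi
    have htrue_i : traj f (x (t - L)) wseq i = x (t - L + i) := traj_true i (le_of_lt hi)
    have hest_i : traj f z whatseq i = traj f z what i := traj_est i (le_of_lt hi)
    rw [hws, hvs, hwhs, hvhs, htrue_i, hest_i]
    apply max_le
    · -- w term
      calc βw ‖w (t - L + i) - what i‖ (L - 1 - i)
          ≤ βw (‖w (t - L + i)‖ + ‖what i‖) (L - 1 - i) :=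
            hβw.mono' (norm_nonneg _) (norm_sub_le _ _) _
        _ ≤ max (βw (2 * ‖w (t - L + i)‖) (L - 1 - i)) (βw (2 * ‖what i‖) (L - 1 - i)) :=
            hβw.add_le' (norm_nonneg _) (norm_nonneg _) _
        _ ≤ RHS := by
            apply max_le
            · refine le_max_of_le_right (le_max_of_le_right ?_)
              rw [hRw]; exact le_finMax (fun j => βw (2 * ‖w (t - L + j)‖) (L - 1 - j)) hi
            · exact (hJw i hi).trans hJtrue
    · apply max_le
      · -- y term
        have : h (x (t - L + i)) (v (t - L + i)) = y (t - L + i) :=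
          (hy _ (hwin i hi).1 (hwin i hi).2).symm
        rw [this]
        exact (hJy i hi).trans hJtrue
      · -- v term
        calc βv ‖v (t - L + i) - vhat i‖ (L - 1 - i)
            ≤ βv (‖v (t - L + i)‖ + ‖vhat i‖) (L - 1 - i) :=
              hβv.mono' (norm_nonneg _) (norm_sub_le _ _) _
          _ ≤ max (βv (2 * ‖v (t - L + i)‖) (L - 1 - i)) (βv (2 * ‖vhat i‖) (L - 1 - i)) :=
              hβv.add_le' (norm_nonneg _) (norm_nonneg _) _
          _ ≤ RHS := by
              apply max_le
              · refine le_max_of_le_right (le_max_of_le_left ?_)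
                rw [hRv]; exact le_finMax (fun j => βv (2 * ‖v (t - L + j)‖) (L - 1 - j)) hi
              · exact (hJv i hi).trans hJtrue
end

section
/- Let η ∈ (0,1), λ ∈ (0,1), c > 0 and N ≥ 1 an integer with η ≤ λ and c·η^N ≤ λ^N. Let (a_t)_{t≥0} and (b_t)_{t≥0} be nonnegative real sequences such that a_t ≤ c·η^t·a_0 + Σ_{i=0}^{t−1} η^{t−1−i} b_i for all 1 ≤ t ≤ N, and a_t ≤ c·η^N·a_{t−N} + Σ_{i=t−N}^{t−1} η^{t−1−i} b_i for all t > N. Then a_t ≤ c·a_0·λ^t + Σ_{i=0}^{t−1} λ^{t−1−i} b_i for all t ≥ 1. -/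
/-!
Write `B t = c a₀ λ^t + ∑_{i<t} λ^(t-1-i) b_i` for the claimed bound. Splitting the sum at `t - N`
gives `B t = λ^N B(t-N) + ∑_{t-N ≤ i < t} λ^(t-1-i) b_i`, and since `B ≥ 0`, `c η^N ≤ λ^N` and
`η ≤ λ`, the bound `B` is a supersolution of the `N`-step recursion satisfied by `a`. It also
dominates `a` on the first window, so a strong induction in steps of `N` gives `a ≤ B`.
-/

open Finset

section OrderedSemiring

variable {R : Type*} [Semiring R] [PartialOrder R] [IsOrderedRing R]

theorem sum_pow_mul_le_sum_pow_mul {η lam : R} (hη : 0 ≤ η) (hηlam : η ≤ lam) (s : Finset ℕ)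
    (e : ℕ → ℕ) {b : ℕ → R} (hb : ∀ i ∈ s, 0 ≤ b i) :
    ∑ i ∈ s, η ^ e i * b i ≤ ∑ i ∈ s, lam ^ e i * b i :=
  sum_le_sum fun i hi => mul_le_mul_of_nonneg_right (pow_le_pow_left₀ hη hηlam _) (hb i hi)

theorem le_of_window_of_step_recursion {N : ℕ} (hN : 1 ≤ N) {κ : R} (hκ : 0 ≤ κ)
    {u B r : ℕ → R} (hwindow : ∀ t, 1 ≤ t → t ≤ N → u t ≤ B t)
    (hu : ∀ t, N < t → u t ≤ κ * u (t - N) + r t)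
    (hB : ∀ t, N < t → κ * B (t - N) + r t ≤ B t) :
    ∀ t, 1 ≤ t → u t ≤ B t := by
  intro t
  induction t using Nat.strong_induction_on with
  | _ t ih =>
    intro ht
    rcases le_or_gt t N with hle | hlt
    · exact hwindow t ht hle
    · calc u t ≤ κ * u (t - N) + r t := hu t hlt
        _ ≤ κ * B (t - N) + r t := by
          gcongr
          exact ih (t - N) (by omega) (by omega)
        _ ≤ B t := hB t hlt

end OrderedSemiring

theorem sum_range_pow_mul_eq_pow_mul_add_sum_Ico {R : Type*} [CommSemiring R] (lam : R)
    (b : ℕ → R) {N t : ℕ} (hNt : N ≤ t) :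
    ∑ i ∈ range t, lam ^ (t - 1 - i) * b i =
      lam ^ N * ∑ i ∈ range (t - N), lam ^ (t - N - 1 - i) * b i +
        ∑ i ∈ Ico (t - N) t, lam ^ (t - 1 - i) * b i := by
  rw [range_eq_Ico, ← sum_Ico_consecutive _ (Nat.zero_le (t - N)) (Nat.sub_le t N), ← range_eq_Ico,
    mul_sum]
  congr 1
  refine sum_congr rfl fun i hi => ?_
  rw [← mul_assoc, ← pow_add]
  congr 2
  have := mem_range.mp hi
  omega

theorem stmt7_general (η lam c : ℝ) (hη : η ∈ Set.Ioo (0 : ℝ) 1)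
    (hc : 0 < c) (N : ℕ) (hN : 1 ≤ N) (hηlam : η ≤ lam) (hcN : c * η ^ N ≤ lam ^ N)
    (a b : ℕ → ℝ) (ha : ∀ t, 0 ≤ a t) (hb : ∀ t, 0 ≤ b t)
    (h1 : ∀ t, 1 ≤ t → t ≤ N →
      a t ≤ c * η ^ t * a 0 + ∑ i ∈ Finset.range t, η ^ (t - 1 - i) * b i)
    (h2 : ∀ t, N < t →
      a t ≤ c * η ^ N * a (t - N) + ∑ i ∈ Finset.Ico (t - N) t, η ^ (t - 1 - i) * b i) :
    ∀ t, 1 ≤ t → a t ≤ c * a 0 * lam ^ t + ∑ i ∈ Finset.range t, lam ^ (t - 1 - i) * b i := by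
  have hη0 : 0 ≤ η := hη.1.le
  have hlam0 : 0 ≤ lam := hη0.trans hηlam
  refine le_of_window_of_step_recursion hN (by positivity) (fun t ht hle => ?_) h2
    (fun t hlt => ?_)
  · calc a t ≤ c * η ^ t * a 0 + ∑ i ∈ range t, η ^ (t - 1 - i) * b i := h1 t ht hle
      _ ≤ c * lam ^ t * a 0 + ∑ i ∈ range t, lam ^ (t - 1 - i) * b i := by
        gcongr c * ?_ * _ + ?_
        · exact ha 0
        · exact pow_le_pow_left₀ hη0 hηlam t
        · exact sum_pow_mul_le_sum_pow_mul hη0 hηlam _ _ fun i _ => hb i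
      _ = c * a 0 * lam ^ t + ∑ i ∈ range t, lam ^ (t - 1 - i) * b i := by ring
  · have hBnonneg : 0 ≤ c * a 0 * lam ^ (t - N) +
        ∑ i ∈ range (t - N), lam ^ (t - N - 1 - i) * b i :=
      add_nonneg (by have := ha 0; positivity)
        (sum_nonneg fun i _ => mul_nonneg (pow_nonneg hlam0 _) (hb i))
    rw [sum_range_pow_mul_eq_pow_mul_add_sum_Ico lam b hlt.le]
    calc _ ≤ lam ^ N * (c * a 0 * lam ^ (t - N) +
            ∑ i ∈ range (t - N), lam ^ (t - N - 1 - i) * b i) +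
          ∑ i ∈ Ico (t - N) t, lam ^ (t - 1 - i) * b i := by
          gcongr ?_ * _ + ?_
          exact sum_pow_mul_le_sum_pow_mul hη0 hηlam _ _ fun i _ => hb i
      _ = _ := by
        rw [mul_add, ← mul_assoc, mul_comm (lam ^ N), mul_assoc, ← pow_add,
          Nat.add_sub_cancel' hlt.le, add_assoc]

/-- **Recursion-chaining lemma.** A sequence satisfying a within-window bound on
`1 ≤ t ≤ N` and an `N`-step contraction for `t > N` satisfies a uniform geometric
bound with any rate `λ` such that `η ≤ λ` and `c·η^N ≤ λ^N`. -/
theorem stmt7 (η lam c : ℝ) (hη : η ∈ Set.Ioo (0 : ℝ) 1) (hlam : lam ∈ Set.Ioo (0 : ℝ) 1)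
    (hc : 0 < c) (N : ℕ) (hN : 1 ≤ N) (hηlam : η ≤ lam) (hcN : c * η ^ N ≤ lam ^ N)
    (a b : ℕ → ℝ) (ha : ∀ t, 0 ≤ a t) (hb : ∀ t, 0 ≤ b t)
    (h1 : ∀ t, 1 ≤ t → t ≤ N →
      a t ≤ c * η ^ t * a 0 + ∑ i ∈ Finset.range t, η ^ (t - 1 - i) * b i)
    (h2 : ∀ t, N < t →
      a t ≤ c * η ^ N * a (t - N) + ∑ i ∈ Finset.Ico (t - N) t, η ^ (t - 1 - i) * b i) :
    ∀ t, 1 ≤ t → a t ≤ c * a 0 * lam ^ t + ∑ i ∈ Finset.range t, lam ^ (t - 1 - i) * b i :=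
  stmt7_general η lam c hη hc N hN hηlam hcN a b ha hb h1 h2
end

section
/- Define f : ℝ³ × ℝ × ℝ³ → ℝ³ by f(x,u,w) = ( x₁/4 + log(|x₂| + 1)/4 + w₁, arctan(x₁ + x₃²) + w₂, sin(x₂ + x₃)/4 + u + w₃ ) and h : ℝ³ → ℝ by h(x) = x₁ + x₃², and let V(x,z) = |x − z|² (squared Euclidean norm). Then for all x, z, w_x, w_z ∈ ℝ³ and all u ∈ ℝ: V(f(x,u,w_x), f(z,u,w_z)) ≤ (7/16)·V(x,z) + 3·|w_x − w_z|² + 2·(h(x) − h(z))². -/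
open Real

lemma aux_sin_lip (a b : ℝ) : |Real.sin a - Real.sin b| ≤ |a - b| := by
  rw [Real.sin_sub_sin]
  calc |2 * Real.sin ((a - b) / 2) * Real.cos ((a + b) / 2)|
      = 2 * |Real.sin ((a - b) / 2)| * |Real.cos ((a + b) / 2)| := by
        rw [abs_mul, abs_mul]; norm_num
    _ ≤ 2 * |(a - b) / 2| * 1 := by
        apply mul_le_mul (by
          have := Real.abs_sin_le_abs (x := (a - b) / 2)
          linarith) (Real.abs_cos_le_one _) (abs_nonneg _) (by positivity)
    _ = |(a - b)| := by rw [mul_one, abs_div, abs_two]; ring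
    _ = |a - b| := rfl

lemma aux_arctan_lip (a b : ℝ) : |Real.arctan a - Real.arctan b| ≤ |a - b| := by
  have h : LipschitzWith 1 Real.arctan := by
    apply lipschitzWith_of_nnnorm_deriv_le Real.differentiable_arctan
    intro x
    rw [Real.deriv_arctan, ← NNReal.coe_le_coe, coe_nnnorm, Real.norm_eq_abs,
      NNReal.coe_one]
    rw [abs_of_nonneg (by positivity)]
    rw [div_le_one (by positivity)]
    nlinarith [sq_nonneg x]
  have := h.dist_le_mul a b
  simpa [Real.dist_eq] using this

lemma aux_log_lip (a b : ℝ) : |Real.log (|a| + 1) - Real.log (|b| + 1)| ≤ |a - b| := by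
  wlog hw : |b| ≤ |a| generalizing a b
  · rw [abs_sub_comm, abs_sub_comm a b]
    exact this b a (le_of_not_ge hw)
  have h1 : (0:ℝ) < |b| + 1 := by positivity
  have h2 : (0:ℝ) < |a| + 1 := by positivity
  have key : Real.log (|a| + 1) - Real.log (|b| + 1) ≤ |a| - |b| := by
    rw [← Real.log_div h2.ne' h1.ne']
    have hlog := Real.log_le_sub_one_of_pos (show (0:ℝ) < (|a| + 1) / (|b| + 1) by positivity)
    have hq : (|a| + 1) / (|b| + 1) - 1 ≤ |a| - |b| := by
      rw [div_sub_one h1.ne', div_le_iff₀ h1]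
      nlinarith [abs_nonneg b]
    linarith
  have hmono : Real.log (|b| + 1) ≤ Real.log (|a| + 1) :=
    Real.log_le_log (by positivity) (by linarith)
  rw [abs_of_nonneg (by linarith)]
  calc Real.log (|a| + 1) - Real.log (|b| + 1) ≤ |a| - |b| := key
    _ ≤ |a - b| := abs_sub_abs_le_abs_sub a b

lemma aux3 (a b c : ℝ) : (a + b + c) ^ 2 ≤ 3 * a ^ 2 + 3 * b ^ 2 + 3 * c ^ 2 := by
  nlinarith [sq_nonneg (a - b), sq_nonneg (a - c), sq_nonneg (b - c)]

lemma aux2 (a b : ℝ) : (a + b) ^ 2 ≤ 2 * a ^ 2 + 2 * b ^ 2 := by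
  nlinarith [sq_nonneg (a - b)]

lemma aux_sq_le (L d : ℝ) (h : |L| ≤ |d|) : L ^ 2 ≤ d ^ 2 := by
  rw [← sq_abs L, ← sq_abs d]
  exact pow_le_pow_left₀ (abs_nonneg _) h 2

/-- **Dissipation inequality for the third-order example system.**
With `f(x,u,w) = (x₁/4 + log(|x₂|+1)/4 + w₁, arctan(x₁+x₃²) + w₂, sin(x₂+x₃)/4 + u + w₃)`,
`h(x) = x₁ + x₃²` and `V(x,z) = |x−z|²` (squared Euclidean norm), one has
`V(f(x,u,w_x), f(z,u,w_z)) ≤ (7/16)·V(x,z) + 3·|w_x−w_z|² + 2·(h(x)−h(z))²`. -/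
theorem stmt10
    (f : (Fin 3 → ℝ) → ℝ → (Fin 3 → ℝ) → (Fin 3 → ℝ))
    (hf : ∀ x u w, f x u w =
      ![x 0 / 4 + Real.log (|x 1| + 1) / 4 + w 0,
        Real.arctan (x 0 + (x 2) ^ 2) + w 1,
        Real.sin (x 1 + x 2) / 4 + u + w 2])
    (h : (Fin 3 → ℝ) → ℝ) (hh : ∀ x, h x = x 0 + (x 2) ^ 2)
    (V : (Fin 3 → ℝ) → (Fin 3 → ℝ) → ℝ) (hV : ∀ x z, V x z = ∑ i, (x i - z i) ^ 2) :
    ∀ (x z wx wz : Fin 3 → ℝ) (u : ℝ),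
      V (f x u wx) (f z u wz) ≤
        (7 / 16) * V x z + 3 * (∑ i, (wx i - wz i) ^ 2) + 2 * (h x - h z) ^ 2 := by
  intro x z wx wz u
  simp only [hf, hV, hh, Fin.sum_univ_three, Matrix.cons_val_zero, Matrix.cons_val_one,
    Matrix.head_cons, Matrix.cons_val_two, Matrix.tail_cons]
  have hL2 : (Real.log (|x 1| + 1) - Real.log (|z 1| + 1)) ^ 2 ≤ (x 1 - z 1) ^ 2 :=
    aux_sq_le _ _ (by simpa using aux_log_lip (x 1) (z 1))
  have hA2 : (Real.arctan (x 0 + x 2 ^ 2) - Real.arctan (z 0 + z 2 ^ 2)) ^ 2 ≤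
      ((x 0 + x 2 ^ 2) - (z 0 + z 2 ^ 2)) ^ 2 :=
    aux_sq_le _ _ (aux_arctan_lip _ _)
  have hS2 : (Real.sin (x 1 + x 2) - Real.sin (z 1 + z 2)) ^ 2 ≤
      ((x 1 + x 2) - (z 1 + z 2)) ^ 2 :=
    aux_sq_le _ _ (aux_sin_lip _ _)
  have hSq : ((x 1 + x 2) - (z 1 + z 2)) ^ 2 ≤ 2 * (x 1 - z 1) ^ 2 + 2 * (x 2 - z 2) ^ 2 := by
    have := aux2 (x 1 - z 1) (x 2 - z 2)
    have heq : ((x 1 + x 2) - (z 1 + z 2)) = (x 1 - z 1) + (x 2 - z 2) := by ring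
    rw [heq]; exact this
  have e1 : (x 0 / 4 + Real.log (|x 1| + 1) / 4 + wx 0 -
      (z 0 / 4 + Real.log (|z 1| + 1) / 4 + wz 0)) ^ 2 ≤
      3 / 16 * (x 0 - z 0) ^ 2 + 3 / 16 * (x 1 - z 1) ^ 2 + 3 * (wx 0 - wz 0) ^ 2 := by
    have heq : x 0 / 4 + Real.log (|x 1| + 1) / 4 + wx 0 -
        (z 0 / 4 + Real.log (|z 1| + 1) / 4 + wz 0) =
        (x 0 - z 0) / 4 + (Real.log (|x 1| + 1) - Real.log (|z 1| + 1)) / 4 +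
          (wx 0 - wz 0) := by ring
    rw [heq]
    have h3 := aux3 ((x 0 - z 0) / 4) ((Real.log (|x 1| + 1) - Real.log (|z 1| + 1)) / 4)
      (wx 0 - wz 0)
    have hr1 : 3 * ((x 0 - z 0) / 4) ^ 2 = 3 / 16 * (x 0 - z 0) ^ 2 := by ring
    have hr2 : 3 * ((Real.log (|x 1| + 1) - Real.log (|z 1| + 1)) / 4) ^ 2 =
        3 / 16 * (Real.log (|x 1| + 1) - Real.log (|z 1| + 1)) ^ 2 := by ring
    linarith
  have e2 : (Real.arctan (x 0 + x 2 ^ 2) + wx 1 - (Real.arctan (z 0 + z 2 ^ 2) + wz 1)) ^ 2 ≤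
      2 * ((x 0 + x 2 ^ 2) - (z 0 + z 2 ^ 2)) ^ 2 + 2 * (wx 1 - wz 1) ^ 2 := by
    have heq : Real.arctan (x 0 + x 2 ^ 2) + wx 1 - (Real.arctan (z 0 + z 2 ^ 2) + wz 1) =
        (Real.arctan (x 0 + x 2 ^ 2) - Real.arctan (z 0 + z 2 ^ 2)) + (wx 1 - wz 1) := by ring
    rw [heq]
    have h2 := aux2 (Real.arctan (x 0 + x 2 ^ 2) - Real.arctan (z 0 + z 2 ^ 2)) (wx 1 - wz 1)
    linarith
  have e3 : (Real.sin (x 1 + x 2) / 4 + u + wx 2 -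
      (Real.sin (z 1 + z 2) / 4 + u + wz 2)) ^ 2 ≤
      1 / 4 * (x 1 - z 1) ^ 2 + 1 / 4 * (x 2 - z 2) ^ 2 + 2 * (wx 2 - wz 2) ^ 2 := by
    have heq : Real.sin (x 1 + x 2) / 4 + u + wx 2 - (Real.sin (z 1 + z 2) / 4 + u + wz 2) =
        (Real.sin (x 1 + x 2) - Real.sin (z 1 + z 2)) / 4 + (wx 2 - wz 2) := by ring
    rw [heq]
    have h2 := aux2 ((Real.sin (x 1 + x 2) - Real.sin (z 1 + z 2)) / 4) (wx 2 - wz 2)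
    have hr : 2 * ((Real.sin (x 1 + x 2) - Real.sin (z 1 + z 2)) / 4) ^ 2 =
        1 / 8 * (Real.sin (x 1 + x 2) - Real.sin (z 1 + z 2)) ^ 2 := by ring
    linarith
  linarith [e1, e2, e3, sq_nonneg (x 0 - z 0), sq_nonneg (x 2 - z 2), sq_nonneg (wx 1 - wz 1),
    sq_nonneg (wx 2 - wz 2)]
end

section
/- Let η ∈ (0,1), let a, b, c > 0, and define β_x(s,k) = a·s·η^k, β_w(s,k) = b·s·η^k, β_v(s,k) = c·s·η^k for s ≥ 0 and k ∈ ℕ. Let N ≥ 1 be an integer with 2a·η^N < 1, and choose γ ∈ (0,1) such that 2a·(η^{1−γ})^N < 1 (such γ exists). Define α_x(s,k) = 8a²·s·(η^γ)^k, α_w(s,k) = 8ab·s·(η^γ)^k, α_v(s,k) = 8ac·s·(η^γ)^k. Then α_x, α_w, α_v are of class KL and for all s ≥ 0 and k ∈ ℕ: β_x(4β_x(2s,k), N) ≤ α_x(s, k+N) and β_x(2α_x(s,k), N) ≤ α_x(s, k+N); β_x(4β_w(2s,k), N) ≤ α_w(s, k+N) and β_x(2α_w(s,k), N) ≤ α_w(s,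 k+N); β_x(4β_v(2s,k), N) ≤ α_v(s, k+N) and β_x(2α_v(s,k), N) ≤ α_v(s, k+N). -/
/-- Exponentially discounted linear KL function `(s,k) ↦ a·s·ρ^k`. -/
noncomputable def βlin (a ρ : ℝ) : ℝ → ℕ → ℝ := fun s k => a * s * ρ ^ k

lemma isKL_lin (A ρ : ℝ) (hA : 0 < A) (h0 : 0 < ρ) (h1 : ρ < 1) : IsKL (βlin A ρ) := by
  constructor
  · intro k
    refine ⟨Continuous.continuousOn ?_, ?_, by simp [βlin]⟩
    · simp only [βlin]; fun_prop
    intro x _ y _ hxy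
    simp only [βlin]
    have hpk : 0 < ρ ^ k := pow_pos h0 k
    have := mul_lt_mul_of_pos_left hxy hA
    exact mul_lt_mul_of_pos_right this hpk
  · intro s hs
    constructor
    · intro m n hmn
      simp only [βlin]
      exact mul_le_mul_of_nonneg_left
        (pow_le_pow_of_le_one h0.le h1.le hmn) (mul_nonneg hA.le hs)
    · have h := tendsto_pow_atTop_nhds_zero_of_lt_one h0.le h1
      have := h.const_mul (A * s)
      simpa [βlin] using this

lemma aux_ineq (a C η ρ s : ℝ) (N k : ℕ) (ha : 0 ≤ a) (hC : 0 ≤ C) (hs : 0 ≤ s)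
    (hη : 0 ≤ η) (hρ : 0 ≤ ρ) (hηρ : η ≤ ρ) (hk2 : 2 * a * η ^ N ≤ ρ ^ N) :
    a * (4 * (C * (2 * s) * η ^ k)) * η ^ N ≤ 8 * (a * C) * s * ρ ^ (k + N) ∧
    a * (2 * (8 * (a * C) * s * ρ ^ k)) * η ^ N ≤ 8 * (a * C) * s * ρ ^ (k + N) := by
  have h1 : η ^ k ≤ ρ ^ k := pow_le_pow_left₀ hη hηρ k
  have h2 : η ^ N ≤ ρ ^ N := pow_le_pow_left₀ hη hηρ N
  have hρk : 0 ≤ ρ ^ k := pow_nonneg hρ k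
  have hηN : 0 ≤ η ^ N := pow_nonneg hη N
  have hACs : 0 ≤ 8 * (a * C) * s := by positivity
  constructor
  · calc a * (4 * (C * (2 * s) * η ^ k)) * η ^ N
        = (8 * (a * C) * s) * (η ^ k * η ^ N) := by ring
      _ ≤ (8 * (a * C) * s) * (ρ ^ k * ρ ^ N) :=
          mul_le_mul_of_nonneg_left (mul_le_mul h1 h2 hηN hρk) hACs
      _ = 8 * (a * C) * s * ρ ^ (k + N) := by rw [pow_add]
  · calc a * (2 * (8 * (a * C) * s * ρ ^ k)) * η ^ N
        = (8 * (a * C) * s * ρ ^ k) * (2 * a * η ^ N) := by ring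
      _ ≤ (8 * (a * C) * s * ρ ^ k) * ρ ^ N :=
          mul_le_mul_of_nonneg_left hk2 (mul_nonneg hACs hρk)
      _ = 8 * (a * C) * s * ρ ^ (k + N) := by rw [pow_add]; ring

/-- **The discounting conditions of the robust-stability theorem are satisfiable.**
With `β_x(s,k)=a s η^k`, `β_w(s,k)=b s η^k`, `β_v(s,k)=c s η^k` and `2aη^N < 1`,
any `γ ∈ (0,1)` with `2a(η^{1−γ})^N < 1` (such `γ` exists) makes
`α_x(s,k)=8a² s (η^γ)^k`, `α_w(s,k)=8ab s (η^γ)^k`, `α_v(s,k)=8ac s (η^γ)^k`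
class-KL functions satisfying all six discounting inequalities. -/
theorem stmt12 (η a b c : ℝ) (hη : η ∈ Set.Ioo (0 : ℝ) 1)
    (ha : 0 < a) (hb : 0 < b) (hc : 0 < c)
    (N : ℕ) (hN : 1 ≤ N) (hcontr : 2 * a * η ^ N < 1) :
    (∃ γ ∈ Set.Ioo (0 : ℝ) 1, 2 * a * (η ^ ((1 : ℝ) - γ)) ^ N < 1) ∧
    ∀ γ ∈ Set.Ioo (0 : ℝ) 1, 2 * a * (η ^ ((1 : ℝ) - γ)) ^ N < 1 →
      (IsKL (βlin (8 * a ^ 2) (η ^ (γ : ℝ))) ∧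
       IsKL (βlin (8 * (a * b)) (η ^ (γ : ℝ))) ∧
       IsKL (βlin (8 * (a * c)) (η ^ (γ : ℝ)))) ∧
      ∀ s : ℝ, 0 ≤ s → ∀ k : ℕ,
        (βlin a η (4 * βlin a η (2 * s) k) N ≤ βlin (8 * a ^ 2) (η ^ (γ : ℝ)) s (k + N) ∧
         βlin a η (2 * βlin (8 * a ^ 2) (η ^ (γ : ℝ)) s k) N ≤
           βlin (8 * a ^ 2) (η ^ (γ : ℝ)) s (k + N)) ∧
        (βlin a η (4 * βlin b η (2 * s) k) N ≤ βlin (8 * (a * b)) (η ^ (γ : ℝ)) s (k + N) ∧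
         βlin a η (2 * βlin (8 * (a * b)) (η ^ (γ : ℝ)) s k) N ≤
           βlin (8 * (a * b)) (η ^ (γ : ℝ)) s (k + N)) ∧
        (βlin a η (4 * βlin c η (2 * s) k) N ≤ βlin (8 * (a * c)) (η ^ (γ : ℝ)) s (k + N) ∧
         βlin a η (2 * βlin (8 * (a * c)) (η ^ (γ : ℝ)) s k) N ≤
           βlin (8 * (a * c)) (η ^ (γ : ℝ)) s (k + N)) := by
  obtain ⟨hη0, hη1⟩ := hη
  constructor
  · -- existence of γ
    have hcont : ContinuousAt (fun γ : ℝ => 2 * a * (η ^ ((1 : ℝ) - γ)) ^ N) 0 := by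
      have h1 : Continuous fun γ : ℝ => η ^ ((1 : ℝ) - γ) := by
        have : Continuous fun γ : ℝ => Real.exp (((1 : ℝ) - γ) * Real.log η) := by fun_prop
        refine this.congr fun γ => ?_
        rw [Real.rpow_def_of_pos hη0, mul_comm]
      exact (continuous_const.mul (h1.pow N)).continuousAt
    have h0 : (fun γ : ℝ => 2 * a * (η ^ ((1 : ℝ) - γ)) ^ N) 0 < 1 := by
      simpa [Real.rpow_one] using hcontr
    have hev : ∀ᶠ γ in nhds (0 : ℝ), 2 * a * (η ^ ((1 : ℝ) - γ)) ^ N < 1 :=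
      hcont.eventually_lt_const h0
    have hev' : ∀ᶠ γ in nhdsWithin (0 : ℝ) (Set.Ioi 0),
        γ ∈ Set.Ioo (0 : ℝ) 1 ∧ 2 * a * (η ^ ((1 : ℝ) - γ)) ^ N < 1 := by
      filter_upwards [Ioo_mem_nhdsGT_of_mem (by norm_num : (0:ℝ) ∈ Set.Ico (0:ℝ) 1),
        nhdsWithin_le_nhds hev] with γ h1 h2
      exact ⟨h1, h2⟩
    obtain ⟨γ, hγ1, hγ2⟩ := hev'.exists
    exact ⟨γ, hγ1, hγ2⟩
  · intro γ hγ hγcontr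
    set ρ := η ^ (γ : ℝ) with hρdef
    have hρ0 : 0 < ρ := Real.rpow_pos_of_pos hη0 γ
    have hρ1 : ρ < 1 := Real.rpow_lt_one hη0.le hη1 hγ.1
    have hηρ : η ≤ ρ := by
      calc η = η ^ (1 : ℝ) := (Real.rpow_one η).symm
        _ ≤ η ^ (γ : ℝ) := Real.rpow_le_rpow_of_exponent_ge hη0 hη1.le hγ.2.le
    have hsplit : η ^ N = (η ^ ((1 : ℝ) - γ)) ^ N * ρ ^ N := by
      rw [← mul_pow, ← Real.rpow_add hη0]
      norm_num
    have hkey : 2 * a * η ^ N ≤ ρ ^ N := by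
      have hρN : 0 < ρ ^ N := pow_pos hρ0 N
      calc 2 * a * η ^ N = (2 * a * (η ^ ((1 : ℝ) - γ)) ^ N) * ρ ^ N := by
            rw [hsplit]; ring
        _ ≤ 1 * ρ ^ N := mul_le_mul_of_nonneg_right hγcontr.le hρN.le
        _ = ρ ^ N := one_mul _
    refine ⟨⟨isKL_lin _ _ (by positivity) hρ0 hρ1,
             isKL_lin _ _ (by positivity) hρ0 hρ1,
             isKL_lin _ _ (by positivity) hρ0 hρ1⟩, ?_⟩
    intro s hs k
    have hx := aux_ineq a a η ρ s N k ha.le ha.le hs hη0.le hρ0.le hηρ hkey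
    have hw := aux_ineq a b η ρ s N k ha.le hb.le hs hη0.le hρ0.le hηρ hkey
    have hv := aux_ineq a c η ρ s N k ha.le hc.le hs hη0.le hρ0.le hηρ hkey
    refine ⟨⟨?_, ?_⟩, ⟨?_, ?_⟩, ⟨?_, ?_⟩⟩
    · simpa only [βlin, show 8 * a ^ 2 = 8 * (a * a) by ring] using hx.1
    · simpa only [βlin, show 8 * a ^ 2 = 8 * (a * a) by ring] using hx.2
    · simpa only [βlin] using hw.1
    · simpa only [βlin] using hw.2
    · simpa only [βlin] using hv.1
    · simpa only [βlin] using hv.2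
end

section
/- For every ξ₀ ≠ 0, every C > 0 and every λ ∈ (0,1), there exists t ∈ ℕ such that |ξ₀|/√(t·ξ₀² + 1) > C·λ^t. Consequently, the sequence x_t = ξ₀/√(t·ξ₀² + 1), which is the noise-free solution of the system x_{t+1} = x_t/√(x_t² + 1) from x_0 = ξ₀, does not admit any exponential decay bound of the form |x_t| ≤ C·λ^t·|x₀|. -/
lemma stmt14_key (ξ0 : ℝ) (hξ0 : ξ0 ≠ 0) (C lam : ℝ) (hC : 0 < C)
    (hlam : lam ∈ Set.Ioo (0 : ℝ) 1) :
    ∃ t : ℕ, C * lam ^ t * Real.sqrt ((t : ℝ) * ξ0 ^ 2 + 1) < |ξ0| := by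
  obtain ⟨hl0, hl1⟩ := hlam
  have hsq : |lam ^ 2| < 1 := by
    rw [abs_of_pos (by positivity)]
    nlinarith
  have h1 : Filter.Tendsto (fun t : ℕ => (t : ℝ) ^ 1 * (lam ^ 2) ^ t)
      Filter.atTop (nhds 0) := tendsto_pow_const_mul_const_pow_of_abs_lt_one 1 hsq
  have h2 : Filter.Tendsto (fun t : ℕ => (lam ^ 2) ^ t) Filter.atTop (nhds 0) :=
    tendsto_pow_atTop_nhds_zero_of_norm_lt_one hsq
  have h3 : Filter.Tendsto
      (fun t : ℕ => (t : ℝ) ^ 1 * (lam ^ 2) ^ t * ξ0 ^ 2 + (lam ^ 2) ^ t)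
      Filter.atTop (nhds 0) := by
    have := (h1.mul_const (ξ0 ^ 2)).add h2
    simpa using this
  have h4 : Filter.Tendsto
      (fun t : ℕ => C * Real.sqrt ((t : ℝ) ^ 1 * (lam ^ 2) ^ t * ξ0 ^ 2 + (lam ^ 2) ^ t))
      Filter.atTop (nhds 0) := by
    have := ((Real.continuous_sqrt.tendsto 0).comp h3).const_mul C
    simpa using this
  have habs : 0 < |ξ0| := abs_pos.mpr hξ0
  obtain ⟨t, ht⟩ := (h4.eventually_lt_const habs).exists
  refine ⟨t, ?_⟩
  have heq : lam ^ t * Real.sqrt ((t : ℝ) * ξ0 ^ 2 + 1)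
      = Real.sqrt ((t : ℝ) ^ 1 * (lam ^ 2) ^ t * ξ0 ^ 2 + (lam ^ 2) ^ t) := by
    rw [show (lam ^ 2) ^ t = (lam ^ t) ^ 2 by ring]
    rw [show ((t : ℝ) ^ 1 * (lam ^ t) ^ 2 * ξ0 ^ 2 + (lam ^ t) ^ 2)
        = (lam ^ t) ^ 2 * ((t : ℝ) * ξ0 ^ 2 + 1) by ring]
    rw [Real.sqrt_mul (by positivity), Real.sqrt_sq (by positivity)]
  calc C * lam ^ t * Real.sqrt ((t : ℝ) * ξ0 ^ 2 + 1)
      = C * Real.sqrt ((t : ℝ) ^ 1 * (lam ^ 2) ^ t * ξ0 ^ 2 + (lam ^ 2) ^ t) := by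
        rw [mul_assoc, heq]
    _ < |ξ0| := ht

/-- **No exponential decay bound for `t ↦ ξ₀/√(t·ξ₀²+1)`.**
For every `ξ₀ ≠ 0`, `C > 0` and `λ ∈ (0,1)` there is `t` with
`|ξ₀|/√(t·ξ₀²+1) > C·λ^t`; consequently the noise-free solution
`x_t = ξ₀/√(t·ξ₀²+1)` of `x_{t+1} = x_t/√(x_t²+1)`, `x_0 = ξ₀`, admits no bound of
the form `|x_t| ≤ C·λ^t·|x₀|`. -/
theorem stmt14 (ξ0 : ℝ) (hξ0 : ξ0 ≠ 0) (C lam : ℝ) (hC : 0 < C)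
    (hlam : lam ∈ Set.Ioo (0 : ℝ) 1) :
    (∃ t : ℕ, C * lam ^ t < |ξ0| / Real.sqrt ((t : ℝ) * ξ0 ^ 2 + 1)) ∧
    ¬ (∀ t : ℕ, |ξ0 / Real.sqrt ((t : ℝ) * ξ0 ^ 2 + 1)| ≤ C * lam ^ t * |ξ0|) := by
  have hs : ∀ t : ℕ, (0 : ℝ) < Real.sqrt ((t : ℝ) * ξ0 ^ 2 + 1) :=
    fun t => Real.sqrt_pos.mpr (by positivity)
  constructor
  · obtain ⟨t, ht⟩ := stmt14_key ξ0 hξ0 C lam hC hlam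
    exact ⟨t, (lt_div_iff₀ (hs t)).mpr ht⟩
  · intro h
    obtain ⟨t, ht⟩ := stmt14_key ξ0 hξ0 (C * |ξ0|) lam (by positivity) hlam
    have h1 := h t
    rw [abs_div, abs_of_pos (hs t)] at h1
    have h2 : C * lam ^ t * |ξ0| * Real.sqrt ((t : ℝ) * ξ0 ^ 2 + 1) < |ξ0| := by
      calc C * lam ^ t * |ξ0| * Real.sqrt ((t : ℝ) * ξ0 ^ 2 + 1)
          = C * |ξ0| * lam ^ t * Real.sqrt ((t : ℝ) * ξ0 ^ 2 + 1) := by ring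
        _ < |ξ0| := ht
    have h3 : |ξ0| ≤ C * lam ^ t * |ξ0| * Real.sqrt ((t : ℝ) * ξ0 ^ 2 + 1) :=
      (div_le_iff₀ (hs t)).mp h1
    linarith
end

section
/- Consider the system x_{t+1} = f(x_t, w_t), y_t = h(x_t, v_t) with state space X ⊆ ℝⁿ, noise sets W ⊆ ℝⁿ, V ⊆ ℝ^m. Suppose there exist V : X × X → ℝ≥0, functions α₁, α₂, α₃ of class K∞ and σ_w, σ_y, σ_v of class K such that for all x, z ∈ X, w_x, w_z ∈ W, v_x, v_z ∈ V: α₁(|x − z|) ≤ V(x,z) ≤ α₂(|x − z|) and V(f(x,w_x), f(z,w_z)) ≤ V(x,z) − α₃(|x − z|) + σ_w(|w_x − w_z|) + σ_y(|h(x,v_x) − h(z,v_z)|) + σ_v(|v_x − v_z|). Then there exists a K∞ function σ with σ(s) < s for all s > 0 such that, defining β(s,k) = σ^k(s) (the k-fold iterate of σ) and φ_ℓ(s) = 3·α₂(α₃^{-1}(6·σ_ℓ(s))) + 3·σ_ℓ(s) for ℓ ∈ {w, y, v}, every pair of trajectories x_{t+1} = f(x_t, w_{x,t}), z_{t+1}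 = f(z_t, w_{z,t}) with x_0, z_0 ∈ X, w_{x,t}, w_{z,t} ∈ W, v_{x,t}, v_{z,t} ∈ V satisfies, for all t ≥ 0: |x_t − z_t| ≤ max( α₁^{-1}(β(α₂(|x_0 − z_0|), t)), max_{0≤i≤t−1} α₁^{-1}(β(φ_w(|w_{x,i} − w_{z,i}|), t−1−i)), max_{0≤i≤t−1} α₁^{-1}(β(φ_y(|h(x_i, v_{x,i}) − h(z_i, v_{z,i})|), t−1−i)), max_{0≤i≤t−1} α₁^{-1}(β(φ_v(|v_{x,i} − v_{z,i}|), t−1−i)) ). -/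
/-- A function of class K on `ℝ≥0`. -/
def IsK (α : ℝ → ℝ) : Prop :=
  ContinuousOn α (Set.Ici 0) ∧ StrictMonoOn α (Set.Ici 0) ∧ α 0 = 0

/-- A function of class K∞ on `ℝ≥0`. -/
def IsKInf (α : ℝ → ℝ) : Prop :=
  IsK α ∧ Filter.Tendsto α Filter.atTop Filter.atTop

/-!
Along a pair of trajectories put `V_t = V(x_t, z_t)` and `e_t = |x_t - z_t|`. In one step, either
the noise terms are at most half of the decrease `α₃(e_t) ≥ α₃(α₂⁻¹(V_t))`, and then
`V_{t+1} ≤ σ(V_t)` for a K∞ function `σ < id` lying above `id - α₃ ∘ α₂⁻¹ / 4`; or the noise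
dominates, which bounds `e_t` by `α₃⁻¹(6 max_ℓ σ_ℓ)` and hence `V_{t+1}` by the largest gain
`φ_ℓ`. Thus `V_{t+1} ≤ max(σ(V_t), max_ℓ φ_ℓ)`; iterating the monotone `σ` bounds `V_t`, and
`α₁⁻¹` turns this into the bound on `e_t`.
-/

open Set Filter

lemma apply_max_le_max_apply (j : ℝ → ℝ) (p q : ℝ) : j (max p q) ≤ max (j p) (j q) := by
  rcases max_choice p q with h | h <;> rw [h]
  exacts [le_max_left _ _, le_max_right _ _]

lemma apply_max_max_le (j : ℝ → ℝ) (p q r : ℝ) :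
    j (max p (max q r)) ≤ max (j p) (max (j q) (j r)) :=
  (apply_max_le_max_apply j p _).trans (max_le_max le_rfl (apply_max_le_max_apply j q r))

lemma apply_finMax_le (j : ℝ → ℝ) (hj0 : j 0 ≤ 0) {g g' : ℕ → ℝ} :
    ∀ t, (∀ i < t, j (g i) ≤ g' i) → j (finMax g t) ≤ finMax g' t
  | 0, _ => hj0
  | t + 1, h => (apply_max_le_max_apply j _ _).trans <| max_le_max
      (apply_finMax_le j hj0 t fun i hi => h i (Nat.lt_succ_of_lt hi)) (h t (Nat.lt_succ_self t))

lemma le_max_iterate_finMax {σ : ℝ → ℝ} (hσ : Monotone σ) (hσ0 : σ 0 ≤ 0) {v Φ : ℕ → ℝ} {b : ℝ}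
    (h0 : v 0 ≤ b) (hstep : ∀ t, v (t + 1) ≤ max (σ (v t)) (Φ t)) :
    ∀ t, v t ≤ max (σ^[t] b) (finMax (fun i => σ^[t - 1 - i] (Φ i)) t)
  | 0 => le_max_of_le_left h0
  | t + 1 => by
    have ih := le_max_iterate_finMax hσ hσ0 h0 hstep t
    have hshift : σ (finMax (fun i => σ^[t - 1 - i] (Φ i)) t) ≤
        finMax (fun i => σ^[t - i] (Φ i)) t :=
      apply_finMax_le σ hσ0 t fun i hi => by
        rw [← Function.iterate_succ_apply' σ, show (t - 1 - i).succ = t - i by omega]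
    have hσv : σ (v t) ≤ max (σ^[t + 1] b) (finMax (fun i => σ^[t - i] (Φ i)) t) := by
      rw [Function.iterate_succ_apply']
      exact (hσ ih).trans ((apply_max_le_max_apply σ _ _).trans (max_le_max le_rfl hshift))
    simp only [finMax, Nat.add_sub_cancel, Nat.sub_self, Function.iterate_zero, id]
    refine (hstep t).trans (max_le (hσv.trans ?_) ?_)
    · exact max_le_max le_rfl (le_max_left _ _)
    · exact le_max_of_le_right (le_max_right _ _)

lemma IsK.nonneg {α : ℝ → ℝ} (hα : IsK α) {s : ℝ} (hs : 0 ≤ s) : 0 ≤ α s :=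
  hα.2.2 ▸ hα.2.1.monotoneOn self_mem_Ici hs hs

lemma IsK.mono {α : ℝ → ℝ} (hα : IsK α) {p q : ℝ} (hp : 0 ≤ p) (hpq : p ≤ q) : α p ≤ α q :=
  hα.2.1.monotoneOn hp (hp.trans hpq) hpq

section Inverse

variable {α αinv : ℝ → ℝ} {s t : Set ℝ}

lemma StrictMonoOn.le_rightInvOn_iff (hα : StrictMonoOn α s) (hinv : RightInvOn αinv α t)
    (hmaps : MapsTo αinv t s) {e p : ℝ} (he : e ∈ s) (hp : p ∈ t) : e ≤ αinv p ↔ α e ≤ p := by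
  rw [← hα.le_iff_le he (hmaps hp), hinv hp]

lemma StrictMonoOn.rightInvOn_le_iff (hα : StrictMonoOn α s) (hinv : RightInvOn αinv α t)
    (hmaps : MapsTo αinv t s) {e p : ℝ} (he : e ∈ s) (hp : p ∈ t) : αinv p ≤ e ↔ p ≤ α e := by
  rw [← hα.le_iff_le (hmaps hp) he, hinv hp]

lemma StrictMonoOn.monotoneOn_rightInvOn (hα : StrictMonoOn α s) (hinv : RightInvOn αinv α t)
    (hmaps : MapsTo αinv t s) : MonotoneOn αinv t := fun p hp q hq hpq =>
  (hα.rightInvOn_le_iff hinv hmaps (hmaps hq) hp).2 (by rwa [hinv hq])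

end Inverse

lemma traj_mem {n : ℕ} {X W : Set (EuclideanSpace ℝ (Fin n))}
    {f : EuclideanSpace ℝ (Fin n) → EuclideanSpace ℝ (Fin n) → EuclideanSpace ℝ (Fin n)}
    (hfX : ∀ x ∈ X, ∀ w ∈ W, f x w ∈ X) {x0 : EuclideanSpace ℝ (Fin n)}
    {w : ℕ → EuclideanSpace ℝ (Fin n)} (hx0 : x0 ∈ X) (hw : ∀ i, w i ∈ W) :
    ∀ t, traj f x0 w t ∈ X
  | 0 => hx0
  | t + 1 => hfX _ (traj_mem hfX hx0 hw t) _ (hw t)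

section Contraction

/-- The running supremum of `r - ρ r / 2` over `[0, s]`: unlike `s - ρ s / 2` itself, it is
monotone and 1-Lipschitz, whatever the regularity of `ρ`. -/
noncomputable def envelope (ρ : ℝ → ℝ) (s : ℝ) : ℝ := sSup ((fun r => r - ρ r / 2) '' Icc 0 s)

noncomputable def contraction (ρ : ℝ → ℝ) (s : ℝ) : ℝ := (s + envelope ρ s) / 2

variable {ρ : ℝ → ℝ} {r s s' : ℝ}

lemma envelope_le {B : ℝ} (hs : 0 ≤ s) (h : ∀ r, 0 ≤ r → r ≤ s → r - ρ r / 2 ≤ B) :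
    envelope ρ s ≤ B :=
  csSup_le ((nonempty_Icc.2 hs).image _) (forall_mem_image.2 fun r hr => h r hr.1 hr.2)

lemma envelope_of_neg (hs : s < 0) : envelope ρ s = 0 := by
  simp [envelope, Icc_eq_empty_of_lt hs]

variable (hρ : Monotone ρ) (hρ0 : ρ 0 = 0)
include hρ hρ0

lemma le_envelope (hr0 : 0 ≤ r) (hrs : r ≤ s) : r - ρ r / 2 ≤ envelope ρ s := by
  refine le_csSup ⟨s, forall_mem_image.2 fun r' hr' => ?_⟩ (mem_image_of_mem _ ⟨hr0, hrs⟩)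
  have := hρ0 ▸ hρ hr'.1
  linarith [hr'.2]

lemma envelope_nonneg (hs : 0 ≤ s) : 0 ≤ envelope ρ s := by
  simpa [hρ0] using le_envelope hρ hρ0 le_rfl hs

lemma monotone_envelope : Monotone (envelope ρ) := by
  intro s s' hss'
  rcases lt_or_ge s 0 with hs | hs
  · rw [envelope_of_neg hs]
    rcases lt_or_ge s' 0 with hs' | hs'
    exacts [(envelope_of_neg hs').ge, envelope_nonneg hρ hρ0 hs']
  · exact envelope_le hs fun r hr0 hrs => le_envelope hρ hρ0 hr0 (hrs.trans hss')

lemma envelope_le_add_sub (hs : 0 ≤ s) (hss' : s ≤ s') :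
    envelope ρ s' ≤ envelope ρ s + (s' - s) := by
  refine envelope_le (hs.trans hss') fun r hr0 hrs' => ?_
  rcases le_or_gt r s with hrs | hsr
  · linarith [le_envelope hρ hρ0 hr0 hrs]
  · linarith [hρ hsr.le, le_envelope hρ hρ0 hs le_rfl]

lemma envelope_lt_self (hρpos : ∀ s, 0 < s → 0 < ρ s) (hs : 0 < s) : envelope ρ s < s := by
  have hbound : envelope ρ s ≤ max (s / 2) (s - ρ (s / 2) / 2) := by
    refine envelope_le hs.le fun r hr0 hrs => ?_
    rcases le_or_gt r (s / 2) with hr | hr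
    · exact le_max_of_le_left (by linarith [hρ0 ▸ hρ hr0])
    · exact le_max_of_le_right (by linarith [hρ hr.le])
  exact hbound.trans_lt (max_lt (by linarith) (by linarith [hρpos (s / 2) (by linarith)]))

lemma strictMono_contraction : StrictMono (contraction ρ) := fun s s' hss' => by
  have := monotone_envelope hρ hρ0 hss'.le
  unfold contraction
  linarith

lemma contraction_zero : contraction ρ 0 = 0 := by
  have hle : envelope ρ 0 ≤ 0 :=
    envelope_le le_rfl fun r hr0 hr => by simp [le_antisymm hr hr0, hρ0]
  simp [contraction, le_antisymm hle (envelope_nonneg hρ hρ0 le_rfl)]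

lemma contraction_lt_self (hρpos : ∀ s, 0 < s → 0 < ρ s) (hs : 0 < s) : contraction ρ s < s := by
  have := envelope_lt_self hρ hρ0 hρpos hs
  unfold contraction
  linarith

lemma sub_le_contraction (hs : 0 ≤ s) : s - ρ s / 4 ≤ contraction ρ s := by
  have := le_envelope hρ hρ0 hs le_rfl
  unfold contraction
  linarith

lemma isKInf_contraction : IsKInf (contraction ρ) := by
  have hlip : LipschitzOnWith 1 (contraction ρ) (Ici 0) := by
    refine LipschitzOnWith.of_le_add fun x hx y hy => ?_
    rcases le_total x y with hxy | hyx
    · linarith [(strictMono_contraction hρ hρ0).monotone hxy, dist_nonneg (x := x) (y := y)]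
    · have := envelope_le_add_sub hρ hρ0 hy hyx
      rw [Real.dist_eq, abs_of_nonneg (sub_nonneg.2 hyx)]
      unfold contraction
      linarith
  refine ⟨⟨hlip.continuousOn, (strictMono_contraction hρ hρ0).strictMonoOn _,
    contraction_zero hρ hρ0⟩, tendsto_atTop_mono' _ ?_ (tendsto_id.atTop_div_const two_pos)⟩
  filter_upwards [eventually_ge_atTop 0] with s hs
  have := envelope_nonneg hρ hρ0 hs
  unfold contraction
  dsimp only [id]
  linarith

end Contraction

section Lyapunov

open Topology

variable {α₂ α₃ α₃inv : ℝ → ℝ} {v e : ℝ}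

/-- `α₃ ∘ α₂⁻¹`, written without inverting `α₂`: the decrease `α₃ ‖x - z‖` of the Lyapunov
function is at least `lyapDecrease α₂ α₃ (V x z)`. -/
noncomputable def lyapDecrease (α₂ α₃ : ℝ → ℝ) (v : ℝ) : ℝ := sInf (α₃ '' {e | 0 ≤ e ∧ v ≤ α₂ e})

lemma lyapDecrease_le (hα₃ : IsK α₃) (he : 0 ≤ e) (hv : v ≤ α₂ e) :
    lyapDecrease α₂ α₃ v ≤ α₃ e :=
  csInf_le ⟨0, forall_mem_image.2 fun _ hx => hα₃.nonneg hx.1⟩ (mem_image_of_mem _ ⟨he, hv⟩)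

lemma le_lyapDecrease {B : ℝ} (hα₂ : Tendsto α₂ atTop atTop)
    (h : ∀ e, 0 ≤ e → v ≤ α₂ e → B ≤ α₃ e) : B ≤ lyapDecrease α₂ α₃ v := by
  obtain ⟨e, he⟩ := ((eventually_ge_atTop 0).and (hα₂.eventually_ge_atTop v)).exists
  exact le_csInf ⟨_, mem_image_of_mem _ he⟩ (forall_mem_image.2 fun e he => h e he.1 he.2)

lemma lyapDecrease_nonneg (hα₂ : Tendsto α₂ atTop atTop) (hα₃ : IsK α₃) (v : ℝ) :
    0 ≤ lyapDecrease α₂ α₃ v :=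
  le_lyapDecrease hα₂ fun _ he _ => hα₃.nonneg he

lemma monotone_lyapDecrease (hα₂ : Tendsto α₂ atTop atTop) (hα₃ : IsK α₃) :
    Monotone (lyapDecrease α₂ α₃) := fun _ _ hvv' =>
  le_lyapDecrease hα₂ fun _ he hv' => lyapDecrease_le hα₃ he (hvv'.trans hv')

lemma lyapDecrease_zero (hα₂ : IsKInf α₂) (hα₃ : IsK α₃) : lyapDecrease α₂ α₃ 0 = 0 :=
  le_antisymm ((lyapDecrease_le hα₃ le_rfl hα₂.1.2.2.ge).trans_eq hα₃.2.2)
    (lyapDecrease_nonneg hα₂.2 hα₃ 0)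

lemma lyapDecrease_pos (hα₂ : IsKInf α₂) (hα₃ : IsK α₃) (hv : 0 < v) :
    0 < lyapDecrease α₂ α₃ v := by
  have hc : Tendsto α₂ (𝓝[>] 0) (𝓝 0) := by
    simpa [hα₂.1.2.2] using ((hα₂.1.1 0 self_mem_Ici).mono Ioi_subset_Ici_self).tendsto
  obtain ⟨δ, hδv, hδ⟩ := ((hc.eventually (gt_mem_nhds hv)).and self_mem_nhdsWithin).exists
  calc 0 = α₃ 0 := hα₃.2.2.symm
    _ < α₃ δ := hα₃.2.1 self_mem_Ici (mem_Ici.2 (le_of_lt hδ)) hδ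
    _ ≤ lyapDecrease α₂ α₃ v := le_lyapDecrease hα₂.2 fun e he hve =>
        hα₃.mono (le_of_lt hδ) <| le_of_not_gt fun heδ =>
          (hve.trans (hα₂.1.mono he heδ.le)).not_gt hδv

/-- The gain `φ_ℓ = noiseGain α₂ α₃⁻¹ ∘ σ_ℓ` of the paper. -/
def noiseGain (α₂ α₃inv : ℝ → ℝ) (s : ℝ) : ℝ := 3 * α₂ (α₃inv (6 * s)) + 3 * s

lemma le_max_contraction_noiseGain (hα₂ : IsKInf α₂) (hα₃ : IsK α₃)
    (hinv : RightInvOn α₃inv α₃ (Ici 0)) (hmaps : MapsTo α₃inv (Ici 0) (Ici 0))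
    {v v' a b c : ℝ} (hv : 0 ≤ v) (he : 0 ≤ e) (ha : 0 ≤ a) (hb : 0 ≤ b) (hc : 0 ≤ c)
    (hve : v ≤ α₂ e) (hv' : v' ≤ v - α₃ e + (a + b + c)) :
    v' ≤ max (contraction (lyapDecrease α₂ α₃) v) (noiseGain α₂ α₃inv (max a (max b c))) := by
  set M := max a (max b c)
  have hM : a + b + c ≤ 3 * M := by
    linarith [le_max_left a (max b c), le_max_right a (max b c), le_max_left b c, le_max_right b c]
  have hα₃e := hα₃.nonneg he
  rcases le_or_gt (2 * (a + b + c)) (α₃ e) with hdec | hnoise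
  · refine le_max_of_le_left ?_
    have := sub_le_contraction (monotone_lyapDecrease hα₂.2 hα₃) (lyapDecrease_zero hα₂ hα₃) hv
    linarith [lyapDecrease_le hα₃ he hve, lyapDecrease_nonneg hα₂.2 hα₃ v]
  · refine le_max_of_le_right ?_
    have hu : (0 : ℝ) ≤ 2 * (a + b + c) := by positivity
    have h6M : (0 : ℝ) ≤ 6 * M := by linarith
    have heu : e ≤ α₃inv (2 * (a + b + c)) :=
      (hα₃.2.1.le_rightInvOn_iff hinv hmaps he hu).2 hnoise.le
    have huM : α₃inv (2 * (a + b + c)) ≤ α₃inv (6 * M) :=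
      hα₃.2.1.monotoneOn_rightInvOn hinv hmaps hu h6M (by linarith)
    have := hα₂.1.mono he (heu.trans huM)
    have := hα₂.1.nonneg (hmaps h6M)
    unfold noiseGain
    linarith

end Lyapunov

/-- **Lyapunov characterization of i-UIOSS with multiplicative measurement noise.**
If `V` is an i-UIOSS Lyapunov function for `x_{t+1} = f(x_t,w_t)`, `y_t = h(x_t,v_t)`,
i.e. `α₁(|x−z|) ≤ V(x,z) ≤ α₂(|x−z|)` and
`V(f(x,w_x), f(z,w_z)) ≤ V(x,z) − α₃(|x−z|) + σ_w(|w_x−w_z|) + σ_y(|h(x,v_x)−h(z,v_z)|)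
+ σ_v(|v_x−v_z|)`, then there is a K∞ function `σ` with `σ(s) < s` for `s > 0` such
that every pair of trajectories satisfies the i-UIOSS estimate with
`β(s,k) = σ^[k](s)` and `φ_ℓ(s) = 3α₂(α₃⁻¹(6σ_ℓ(s))) + 3σ_ℓ(s)`. -/
theorem stmt15 {n m : ℕ}
    (X W : Set (EuclideanSpace ℝ (Fin n))) (Vset : Set (EuclideanSpace ℝ (Fin m)))
    (f : EuclideanSpace ℝ (Fin n) → EuclideanSpace ℝ (Fin n) → EuclideanSpace ℝ (Fin n))
    (h : EuclideanSpace ℝ (Fin n) → EuclideanSpace ℝ (Fin m) → EuclideanSpace ℝ (Fin m))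
    (hfX : ∀ x ∈ X, ∀ w ∈ W, f x w ∈ X)
    (V : EuclideanSpace ℝ (Fin n) → EuclideanSpace ℝ (Fin n) → ℝ)
    (α₁ α₂ α₃ : ℝ → ℝ) (hα₁ : IsKInf α₁) (hα₂ : IsKInf α₂) (hα₃ : IsKInf α₃)
    (σw σy σv : ℝ → ℝ) (hσw : IsK σw) (hσy : IsK σy) (hσv : IsK σv)
    -- the inverses of the K∞ functions α₁ and α₃ on ℝ≥0
    (α₁inv α₃inv : ℝ → ℝ)
    (hα₁inv : ∀ s : ℝ, 0 ≤ s → α₁ (α₁inv s) = s ∧ α₁inv (α₁ s) = s ∧ 0 ≤ α₁inv s)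
    (hα₃inv : ∀ s : ℝ, 0 ≤ s → α₃ (α₃inv s) = s ∧ α₃inv (α₃ s) = s ∧ 0 ≤ α₃inv s)
    (hsand : ∀ x ∈ X, ∀ z ∈ X, α₁ ‖x - z‖ ≤ V x z ∧ V x z ≤ α₂ ‖x - z‖)
    (hdissip : ∀ x ∈ X, ∀ z ∈ X, ∀ wx ∈ W, ∀ wz ∈ W, ∀ vx ∈ Vset, ∀ vz ∈ Vset,
      V (f x wx) (f z wz) ≤
        V x z - α₃ ‖x - z‖ + σw ‖wx - wz‖ + σy ‖h x vx - h z vz‖ + σv ‖vx - vz‖) :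
    ∃ σ : ℝ → ℝ, IsKInf σ ∧ (∀ s : ℝ, 0 < s → σ s < s) ∧
      ∀ (x0 z0 : EuclideanSpace ℝ (Fin n)) (wx wz : ℕ → EuclideanSpace ℝ (Fin n))
        (vx vz : ℕ → EuclideanSpace ℝ (Fin m)),
        x0 ∈ X → z0 ∈ X → (∀ i, wx i ∈ W) → (∀ i, wz i ∈ W) →
        (∀ i, vx i ∈ Vset) → (∀ i, vz i ∈ Vset) →
        ∀ t : ℕ,
          ‖traj f x0 wx t - traj f z0 wz t‖ ≤
            max (α₁inv (σ^[t] (α₂ ‖x0 - z0‖)))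
              (finMax (fun i =>
                max (α₁inv (σ^[t - 1 - i]
                    (3 * α₂ (α₃inv (6 * σw ‖wx i - wz i‖)) + 3 * σw ‖wx i - wz i‖)))
                  (max (α₁inv (σ^[t - 1 - i]
                      (3 * α₂ (α₃inv (6 * σy ‖h (traj f x0 wx i) (vx i) -
                          h (traj f z0 wz i) (vz i)‖)) +
                        3 * σy ‖h (traj f x0 wx i) (vx i) - h (traj f z0 wz i) (vz i)‖)))
                    (α₁inv (σ^[t - 1 - i]
                      (3 * α₂ (α₃inv (6 * σv ‖vx i - vz i‖)) + 3 * σv ‖vx i - vz i‖))))) t) := by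
  have hψ := monotone_lyapDecrease hα₂.2 hα₃.1
  have hψ0 := lyapDecrease_zero hα₂ hα₃.1
  set σ := contraction (lyapDecrease α₂ α₃)
  refine ⟨σ, isKInf_contraction hψ hψ0,
    fun s => contraction_lt_self hψ hψ0 fun s => lyapDecrease_pos hα₂ hα₃.1, ?_⟩
  intro x0 z0 wx wz vx vz hx0 hz0 hwx hwz hvx hvz t
  have hα₁r : RightInvOn α₁inv α₁ (Ici 0) := fun s hs => (hα₁inv s hs).1
  have hα₁m : MapsTo α₁inv (Ici 0) (Ici 0) := fun s hs => (hα₁inv s hs).2.2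
  have hα₃r : RightInvOn α₃inv α₃ (Ici 0) := fun s hs => (hα₃inv s hs).1
  have hα₃m : MapsTo α₃inv (Ici 0) (Ici 0) := fun s hs => (hα₃inv s hs).2.2
  have hxs := traj_mem hfX hx0 hwx
  have hzs := traj_mem hfX hz0 hwz
  have hV0 : ∀ t, 0 ≤ V (traj f x0 wx t) (traj f z0 wz t) := fun t =>
    (hα₁.1.nonneg (norm_nonneg _)).trans (hsand _ (hxs t) _ (hzs t)).1
  have hV := le_max_iterate_finMax (v := fun t => V (traj f x0 wx t) (traj f z0 wz t))
    (strictMono_contraction hψ hψ0).monotone (contraction_zero hψ hψ0).le (hsand _ hx0 _ hz0).2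
    (fun t => le_max_contraction_noiseGain hα₂ hα₃.1 hα₃r hα₃m (hV0 t) (norm_nonneg _)
      (hσw.nonneg (norm_nonneg _)) (hσy.nonneg (norm_nonneg _)) (hσv.nonneg (norm_nonneg _))
      (hsand _ (hxs t) _ (hzs t)).2
      ((hdissip _ (hxs t) _ (hzs t) _ (hwx t) _ (hwz t) _ (hvx t) _ (hvz t)).trans_eq (by ring)))
    t
  have hα₁inv0 : α₁inv 0 ≤ 0 :=
    (hα₁.1.2.1.rightInvOn_le_iff hα₁r hα₁m self_mem_Ici self_mem_Ici).2 hα₁.1.2.2.ge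
  refine ((hα₁.1.2.1.le_rightInvOn_iff hα₁r hα₁m (norm_nonneg _) (hV0 t)).2
    (hsand _ (hxs t) _ (hzs t)).1).trans ?_
  refine (hα₁.1.2.1.monotoneOn_rightInvOn hα₁r hα₁m (hV0 t) ((hV0 t).trans hV) hV).trans ?_
  refine (apply_max_le_max_apply _ _ _).trans (max_le_max le_rfl ?_)
  exact apply_finMax_le _ hα₁inv0 t fun i _ =>
    apply_max_max_le (fun s => α₁inv (σ^[t - 1 - i] (noiseGain α₂ α₃inv s))) _ _ _
end
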